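/- Fix A ∈ 𝒜 and suppose 0 < p_f(x, A) < 1 for all x ∈ ℝ^d. Since Φ is a strictly increasing continuous bijection from ℝ onto (0,1), its inverse Φ⁻¹ is well defined on (0,1). Then the map x ↦ Φ⁻¹(p_f(x, A)) is (1/σ)-Lipschitz on ℝ^d: for all x, y ∈ ℝ^d, |Φ⁻¹(p_f(x, A)) − Φ⁻¹(p_f(y, A))| ≤ ‖x − y‖₂ / σ. -/

import Mathlib

/-!
The likelihood ratio of `N(t, 1) ⊗ ν` against `N(0, 1) ⊗ ν` is `exp (t s - t² / 2)`, increasing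
in the first coordinate `s` when `t ≥ 0`. So by the Neyman–Pearson argument, among sets of
`N(0, 1) ⊗ ν`-mass at least `Φ(a)` the half-space `{s ≤ a}` has the least `N(t, 1) ⊗ ν`-mass,
namely `Φ(a - t)`. The standard Gaussian on a Euclidean space is such a product: its component
along a unit vector `e` is standard normal and uncorrelated with, hence independent of, the
orthogonal remainder. Taking `e` along `y - x` and rescaling by `σ` gives
`Φ(Φ⁻¹(p_x) - ‖x - y‖ / σ) ≤ p_y`; exchanging `x` and `y` gives the Lipschitz bound.
-/

open MeasureTheory ProbabilityTheory

/-- The standard normal cumulative distribution function `Φ`. -/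
noncomputable def stdNormalCDF (a : ℝ) : ℝ :=
  ((gaussianReal 0 1) (Set.Iic a)).toReal

/-- The isotropic Gaussian measure `N(x, σ²I)` on `ℝ^d`, realized as the translate by `x`
of the product of `d` copies of the real Gaussian `N(0, σ²)`. -/
noncomputable def isoGaussian (d : ℕ) (σ : ℝ) (x : EuclideanSpace ℝ (Fin d)) :
    Measure (EuclideanSpace ℝ (Fin d)) :=
  Measure.map (fun η => x + η)
    (Measure.map (MeasurableEquiv.toLp 2 (Fin d → ℝ))
      (Measure.pi fun _ : Fin d => gaussianReal 0 (σ ^ 2).toNNReal))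

/-- `p_f(x, A) = μ_x(f⁻¹({A}))`: the probability that the base classifier `f`
returns answer `A` on input `x + η`, `η ∼ N(0, σ²I)`. -/
noncomputable def classProb (d : ℕ) (σ : ℝ) {𝒜 : Type*}
    (f : EuclideanSpace ℝ (Fin d) → 𝒜) (x : EuclideanSpace ℝ (Fin d)) (A : 𝒜) : ℝ :=
  (isoGaussian d σ x (f ⁻¹' {A})).toReal

open Set
open scoped ENNReal NNReal RealInnerProductSpace

section CDF

variable (μ : Measure ℝ) [IsProbabilityMeasure μ]

lemma continuous_cdf [NullSingletonClass μ] : Continuous (cdf μ) := by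
  refine continuous_iff_continuousAt.2 fun a => ?_
  rw [(monotone_cdf μ).continuousAt_iff_leftLim_eq_rightLim, StieltjesFunction.rightLim_eq]
  have h := (cdf μ).measure_singleton a
  rw [measure_cdf, measure_singleton, eq_comm, ENNReal.ofReal_eq_zero, sub_nonpos] at h
  exact le_antisymm ((monotone_cdf μ).leftLim_le le_rfl) h

lemma Ioo_subset_range_cdf [NullSingletonClass μ] : Ioo 0 1 ⊆ range (cdf μ) := by
  rintro p ⟨hp0, hp1⟩
  obtain ⟨a, ha⟩ := ((tendsto_cdf_atBot μ).eventually (gt_mem_nhds hp0)).exists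
  obtain ⟨b, hb⟩ := ((tendsto_cdf_atTop μ).eventually (lt_mem_nhds hp1)).exists
  exact mem_range_of_exists_le_of_exists_ge (continuous_cdf μ) ⟨a, ha.le⟩ ⟨b, hb.le⟩

lemma strictMono_cdf (h : volume ≪ μ) : StrictMono (cdf μ) := by
  intro a b hab
  have hIoc : μ (Ioc a b) ≠ 0 := fun h0 => not_le.2 hab (by simpa using h h0)
  rw [← measure_cdf μ, StieltjesFunction.measure_Ioc] at hIoc
  simpa [sub_nonpos] using hIoc

end CDF

lemma stdNormalCDF_eq_cdf : stdNormalCDF = cdf (gaussianReal 0 1) := by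
  ext a
  rw [cdf_eq_real, measureReal_def, stdNormalCDF]

lemma stdNormalCDF_strictMono : StrictMono stdNormalCDF :=
  stdNormalCDF_eq_cdf ▸ strictMono_cdf _ (gaussianReal_absolutelyContinuous' 0 one_ne_zero)

lemma Ioo_subset_range_stdNormalCDF : Ioo 0 1 ⊆ range stdNormalCDF := by
  have := nullSingletonClass_gaussianReal (μ := 0) (one_ne_zero (α := ℝ≥0))
  exact stdNormalCDF_eq_cdf ▸ Ioo_subset_range_cdf _

lemma gaussianReal_one_Iic (m a : ℝ) :
    gaussianReal m 1 (Iic a) = ENNReal.ofReal (stdNormalCDF (a - m)) := by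
  rw [stdNormalCDF_eq_cdf, ofReal_cdf, ← zero_add m, ← gaussianReal_map_add_const,
    Measure.map_apply (measurable_add_const m) measurableSet_Iic]
  congr 1
  ext t
  simp [le_sub_iff_add_le]

lemma gaussianReal_eq_withDensity (m₁ m₂ : ℝ) {v : ℝ≥0} (hv : v ≠ 0) :
    gaussianReal m₂ v = (gaussianReal m₁ v).withDensity
      fun s => ENNReal.ofReal (Real.exp (((m₂ - m₁) * s + (m₁ ^ 2 - m₂ ^ 2) / 2) / v)) := by
  rw [gaussianReal_of_var_ne_zero m₁ hv, gaussianReal_of_var_ne_zero m₂ hv,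
    ← withDensity_mul _ (measurable_gaussianPDF m₁ v) (by fun_prop)]
  congr 1
  ext s
  simp only [Pi.mul_apply, gaussianPDF]
  rw [← ENNReal.ofReal_mul (gaussianPDFReal_nonneg _ _ _)]
  simp only [gaussianPDFReal, mul_assoc, ← Real.exp_add]
  congr 3
  field_simp
  ring

lemma withDensity_le_withDensity_of_measure_le {α : Type*} [MeasurableSpace α]
    (μ : Measure α) [IsFiniteMeasure μ] {r : α → ℝ≥0∞} (hr : Measurable r) {S H : Set α}
    (hS : MeasurableSet S) (hH : MeasurableSet H) (hμ : μ H ≤ μ S) {r₀ : ℝ≥0∞}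
    (hle : ∀ z ∈ H, r z ≤ r₀)
    (hge : ∀ z ∉ H, r₀ ≤ r z) :
    μ.withDensity r H ≤ μ.withDensity r S := by
  have hdiff : μ (H \ S) ≤ μ (S \ H) := by
    rw [← measure_inter_add_sdiff H hS, ← measure_inter_add_sdiff S hH, inter_comm] at hμ
    exact (ENNReal.add_le_add_iff_left (measure_ne_top μ _)).1 hμ
  have hkey : μ.withDensity r (H \ S) ≤ μ.withDensity r (S \ H) :=
    calc μ.withDensity r (H \ S)
      _ = ∫⁻ z in H \ S, r z ∂μ := withDensity_apply _ (hH.diff hS)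
      _ ≤ ∫⁻ _ in H \ S, r₀ ∂μ := setLIntegral_mono measurable_const fun z hz => hle z hz.1
      _ = r₀ * μ (H \ S) := setLIntegral_const _ _
      _ ≤ r₀ * μ (S \ H) := by gcongr
      _ = ∫⁻ _ in S \ H, r₀ ∂μ := (setLIntegral_const _ _).symm
      _ ≤ ∫⁻ z in S \ H, r z ∂μ := setLIntegral_mono hr fun z hz => hge z hz.2
      _ = μ.withDensity r (S \ H) := (withDensity_apply _ (hS.diff hH)).symm
  calc μ.withDensity r H = μ.withDensity r (H ∩ S) + μ.withDensity r (H \ S) :=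
        (measure_inter_add_sdiff H hS).symm
    _ ≤ μ.withDensity r (S ∩ H) + μ.withDensity r (S \ H) := by rw [inter_comm]; gcongr
    _ = μ.withDensity r S := measure_inter_add_sdiff S hH

section Product

variable {F : Type*} [MeasurableSpace F] (ν : Measure F) [IsProbabilityMeasure ν]

lemma gaussianReal_prod_fst_Iic (m a : ℝ) :
    (gaussianReal m 1).prod ν (Prod.fst ⁻¹' Iic a)
      = ENNReal.ofReal (stdNormalCDF (a - m)) := by
  rw [← prod_univ, Measure.prod_prod, measure_univ, mul_one, gaussianReal_one_Iic]

lemma ofReal_stdNormalCDF_sub_le_gaussianReal_prod {S : Set (ℝ × F)} (hS : MeasurableSet S)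
    {t a : ℝ} (ht : 0 ≤ t) (ha : ENNReal.ofReal (stdNormalCDF a) ≤ (gaussianReal 0 1).prod ν S) :
    ENNReal.ofReal (stdNormalCDF (a - t)) ≤ (gaussianReal t 1).prod ν S := by
  set r : ℝ → ℝ≥0∞ := fun s => ENNReal.ofReal (Real.exp (t * s - t ^ 2 / 2))
  have hr : Monotone r := fun s s' hss' => by
    simp only [r]
    gcongr
  have hdens : (gaussianReal t 1).prod ν
      = ((gaussianReal 0 1).prod ν).withDensity (r ∘ Prod.fst) := by
    rw [gaussianReal_eq_withDensity 0 t one_ne_zero, prod_withDensity_left (by fun_prop)]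
    congr
    ext s
    simp only [r, Function.comp_apply]
    congr 2
    push_cast
    ring
  have hH : MeasurableSet (Prod.fst ⁻¹' Iic a : Set (ℝ × F)) :=
    measurable_fst measurableSet_Iic
  rw [← sub_zero a, ← gaussianReal_prod_fst_Iic ν] at ha
  rw [← gaussianReal_prod_fst_Iic ν, hdens]
  exact withDensity_le_withDensity_of_measure_le _ (by fun_prop) hS hH ha (r₀ := r a)
    (fun z hz => hr hz) fun z hz => hr (le_of_not_ge hz)

end Product

section StdGaussian

variable {E : Type*} [NormedAddCommGroup E] [InnerProductSpace ℝ E] [FiniteDimensional ℝ E]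
  [MeasurableSpace E] [BorelSpace E]

lemma map_inner_stdGaussian {e : E} (he : ‖e‖ = 1) :
    (stdGaussian E).map (fun z => ⟪e, z⟫) = gaussianReal 0 1 := by
  have h := IsGaussian.map_eq_gaussianReal (μ := stdGaussian E) (innerSL ℝ e)
  rw [integral_strongDual_stdGaussian, variance_dual_stdGaussian, innerSL_apply_norm, he] at h
  simpa using h

lemma indepFun_inner_sub_stdGaussian {e : E} (he : ‖e‖ = 1) :
    IndepFun (fun z => ⟪e, z⟫) (fun z => z - ⟪e, z⟫ • e) (stdGaussian E) := by
  let L : E →L[ℝ] ℝ × E :=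
    (innerSL ℝ e).prod (ContinuousLinearMap.id ℝ E - (innerSL ℝ e).smulRight e)
  have hlaw : HasGaussianLaw (fun z => (⟪e, z⟫, z - ⟪e, z⟫ • e)) (stdGaussian E) :=
    IsGaussian.hasGaussianLaw_id.map L
  refine hlaw.indepFun_of_covariance_inner fun a b => ?_
  have horth : ⟪a • e, b - ⟪e, b⟫ • e⟫ = 0 := by
    simp only [inner_sub_right, real_inner_smul_left, real_inner_smul_right,
      real_inner_self_eq_norm_sq, he]
    ring
  rw [← horth, ← innerSL_apply_apply ℝ, ← covarianceBilin_stdGaussian,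
    covarianceBilin_apply_eq_cov IsGaussian.memLp_two_id]
  congr 1 <;> ext z
  · simp [inner_smul_left, mul_comm]
  · simp [inner_sub_right, inner_smul_right, real_inner_comm, mul_comm]

lemma map_inner_prod_sub_stdGaussian {e : E} (he : ‖e‖ = 1) :
    (stdGaussian E).map (fun z => (⟪e, z⟫, z - ⟪e, z⟫ • e))
      = (gaussianReal 0 1).prod ((stdGaussian E).map fun z => z - ⟪e, z⟫ • e) := by
  rw [(indepFun_iff_map_prod_eq_prod_map_map (by fun_prop) (by fun_prop)).1
    (indepFun_inner_sub_stdGaussian he), map_inner_stdGaussian he]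

lemma ofReal_stdNormalCDF_sub_le_stdGaussian_preimage_add {T : Set E} (hT : MeasurableSet T)
    (u : E) {a : ℝ} (ha : ENNReal.ofReal (stdNormalCDF a) ≤ stdGaussian E T) :
    ENNReal.ofReal (stdNormalCDF (a - ‖u‖)) ≤ stdGaussian E ((· + u) ⁻¹' T) := by
  rcases eq_or_ne u 0 with rfl | hu
  · simpa using ha
  set e := ‖u‖⁻¹ • u
  have he : ‖e‖ = 1 := norm_smul_inv_norm hu
  have hue : u = ‖u‖ • e := (smul_inv_smul₀ (norm_ne_zero_iff.2 hu) u).symm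
  set ν := (stdGaussian E).map fun z => z - ⟪e, z⟫ • e
  have : IsProbabilityMeasure ν := Measure.isProbabilityMeasure_map (by fun_prop)
  set Ψ : E → ℝ × E := fun z => (⟪e, z⟫, z - ⟪e, z⟫ • e)
  have hΨ : Measurable Ψ := by fun_prop
  set S : Set (ℝ × E) := {p | p.1 • e + p.2 ∈ T}
  have hS : MeasurableSet S := hT.preimage (by fun_prop)
  have hT_eq : T = Ψ ⁻¹' S := by ext z; simp [Ψ, S]
  have hTu_eq : (· + u) ⁻¹' T = Ψ ⁻¹' (Prod.map (· + ‖u‖) id ⁻¹' S) := by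
    ext z
    simp only [mem_preimage, Prod.map, id, Ψ, S, mem_ofPred_eq, add_smul, ← hue]
    congr! 1
    abel
  have hshift : ((gaussianReal 0 1).prod ν).map (Prod.map (· + ‖u‖) id)
      = (gaussianReal ‖u‖ 1).prod ν := by
    rw [← Measure.map_prod_map _ _ (by fun_prop) measurable_id, gaussianReal_map_add_const,
      zero_add, Measure.map_id]
  rw [hT_eq, ← Measure.map_apply hΨ hS, map_inner_prod_sub_stdGaussian he] at ha
  rw [hTu_eq, ← Measure.map_apply hΨ ((measurable_add_const _).prodMap measurable_id hS),
    map_inner_prod_sub_stdGaussian he, ← Measure.map_apply (by fun_prop) hS, hshift]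
  exact ofReal_stdNormalCDF_sub_le_gaussianReal_prod ν hS (norm_nonneg u) ha

end StdGaussian

lemma gaussianReal_zero_sq_eq_map_mul (σ : ℝ) :
    gaussianReal 0 (σ ^ 2).toNNReal = (gaussianReal 0 1).map (σ * ·) := by
  rw [gaussianReal_map_const_mul, mul_zero, mul_one]
  congr
  exact Real.toNNReal_of_nonneg (sq_nonneg σ)

lemma isoGaussian_eq_map_stdGaussian (d : ℕ) (σ : ℝ) (x : EuclideanSpace ℝ (Fin d)) :
    isoGaussian d σ x = (stdGaussian (EuclideanSpace ℝ (Fin d))).map (fun η => x + σ • η) := by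
  have hpi : Measure.pi (fun _ : Fin d => gaussianReal 0 (σ ^ 2).toNNReal)
      = (Measure.pi fun _ : Fin d => gaussianReal 0 1).map (σ • ·) := by
    simp_rw [gaussianReal_zero_sq_eq_map_mul]
    exact ((measurePreserving_pi _ _ fun _ => ⟨measurable_const_mul σ, rfl⟩).map_eq).symm
  rw [isoGaussian, hpi, ← map_pi_eq_stdGaussian, Measure.map_map (by fun_prop) (by fun_prop),
    Measure.map_map (by fun_prop) (by fun_prop), Measure.map_map (by fun_prop) (by fun_prop)]
  rfl

instance isProbabilityMeasure_isoGaussian (d : ℕ) (σ : ℝ) (x : EuclideanSpace ℝ (Fin d)) :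
    IsProbabilityMeasure (isoGaussian d σ x) := by
  rw [isoGaussian_eq_map_stdGaussian]
  exact Measure.isProbabilityMeasure_map (by fun_prop)

lemma ofReal_stdNormalCDF_sub_le_isoGaussian {d : ℕ} {σ : ℝ} (hσ : 0 < σ)
    {S : Set (EuclideanSpace ℝ (Fin d))} (hS : MeasurableSet S) (x y : EuclideanSpace ℝ (Fin d))
    {a : ℝ} (ha : ENNReal.ofReal (stdNormalCDF a) ≤ isoGaussian d σ x S) :
    ENNReal.ofReal (stdNormalCDF (a - ‖x - y‖ / σ)) ≤ isoGaussian d σ y S := by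
  rw [isoGaussian_eq_map_stdGaussian, Measure.map_apply (by fun_prop) hS] at ha ⊢
  have hpre : (· + σ⁻¹ • (y - x)) ⁻¹' ((fun η => x + σ • η) ⁻¹' S)
      = (fun η => y + σ • η) ⁻¹' S := by
    ext η
    simp only [mem_preimage, smul_add, smul_inv_smul₀ hσ.ne']
    congr! 1
    abel
  have hnorm : ‖σ⁻¹ • (y - x)‖ = ‖x - y‖ / σ := by
    rw [norm_smul, norm_inv, Real.norm_of_nonneg hσ.le, norm_sub_rev, inv_mul_eq_div]
  rw [← hpre, ← hnorm]
  exact ofReal_stdNormalCDF_sub_le_stdGaussian_preimage_add (hS.preimage (by fun_prop)) _ ha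

lemma stdNormalCDF_sub_le_classProb {d : ℕ} {σ : ℝ} (hσ : 0 < σ) {𝒜 : Type*}
    {f : EuclideanSpace ℝ (Fin d) → 𝒜} {A : 𝒜} (hf : MeasurableSet (f ⁻¹' {A}))
    (x y : EuclideanSpace ℝ (Fin d)) {a : ℝ} (ha : stdNormalCDF a ≤ classProb d σ f x A) :
    stdNormalCDF (a - ‖x - y‖ / σ) ≤ classProb d σ f y A := by
  rw [classProb, ← ENNReal.ofReal_le_iff_le_toReal (measure_ne_top _ _)] at ha ⊢
  exact ofReal_stdNormalCDF_sub_le_isoGaussian hσ hf x y ha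

theorem probit_classProb_lipschitz_general
    (d : ℕ) (σ : ℝ) (hσ : 0 < σ)
    {𝒜 : Type*}
    (f : EuclideanSpace ℝ (Fin d) → 𝒜)
    (hf : ∀ B : 𝒜, MeasurableSet (f ⁻¹' {B}))
    (A : 𝒜)
    (hp : ∀ x : EuclideanSpace ℝ (Fin d), 0 < classProb d σ f x A ∧ classProb d σ f x A < 1)
    (Φinv : ℝ → ℝ)
    (hΦinv : ∀ a : ℝ, Φinv (stdNormalCDF a) = a) :
    ∀ x y : EuclideanSpace ℝ (Fin d),
      |Φinv (classProb d σ f x A) - Φinv (classProb d σ f y A)| ≤ ‖x - y‖ / σ := by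
  have probit_sub_le : ∀ x y a b, stdNormalCDF a = classProb d σ f x A →
      stdNormalCDF b = classProb d σ f y A → a - b ≤ ‖x - y‖ / σ := by
    intro x y a b ha hb
    have h := stdNormalCDF_sub_le_classProb hσ (hf A) x y ha.le
    rw [← hb, stdNormalCDF_strictMono.le_iff_le] at h
    linarith
  intro x y
  obtain ⟨a, ha⟩ := Ioo_subset_range_stdNormalCDF (hp x)
  obtain ⟨b, hb⟩ := Ioo_subset_range_stdNormalCDF (hp y)
  rw [← ha, ← hb, hΦinv, hΦinv, abs_sub_le_iff]
  exact ⟨probit_sub_le x y a b ha hb, norm_sub_rev y x ▸ probit_sub_le y x b a hb ha⟩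

/-- Lipschitz property of the probit-transformed smoothed class probability:
if `0 < p_f(x, A) < 1` everywhere, then `x ↦ Φ⁻¹(p_f(x, A))` is `(1/σ)`-Lipschitz, where
`Φinv` is the inverse of the strictly increasing continuous bijection `Φ : ℝ → (0,1)`. -/
theorem probit_classProb_lipschitz
    (d : ℕ) (hd : 1 ≤ d) (σ : ℝ) (hσ : 0 < σ)
    {𝒜 : Type*} [Fintype 𝒜] [Nonempty 𝒜]
    (f : EuclideanSpace ℝ (Fin d) → 𝒜)
    (hf : ∀ B : 𝒜, MeasurableSet (f ⁻¹' {B}))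
    (A : 𝒜)
    (hp : ∀ x : EuclideanSpace ℝ (Fin d), 0 < classProb d σ f x A ∧ classProb d σ f x A < 1)
    (Φinv : ℝ → ℝ)
    (hΦinv : ∀ a : ℝ, Φinv (stdNormalCDF a) = a) :
    ∀ x y : EuclideanSpace ℝ (Fin d),
      |Φinv (classProb d σ f x A) - Φinv (classProb d σ f y A)| ≤ ‖x - y‖ / σ :=
  probit_classProb_lipschitz_general d σ hσ f hf A hp Φinv hΦinv
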